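/- arXiv:1206.6908 — 3 statements merged into one kernel-verified Lean document; each statement's English description precedes it below -/
import Mathlib

section
/- Let u be a k-cycle in S_n and let m be a positive even integer. Then there exists h ∈ S_n such that h^m = 1 and (uh)^m = 1; in particular the set {h ∈ S_n : (uh)^m = h^m} is nonempty. -/
/-!
A cycle `σ` is inverted by the reflection `h` of its support that fixes a base point `x₀` of the
cycle, `h (σ ^ i x₀) = σ ^ (-i) x₀`. Then `h ^ 2 = 1` and `(σ * h) ^ 2 = σ * (h * σ * h) = 1`, so
both `h` and `σ * h` have order dividing every even `m`.
-/

namespace Equiv.Perm.IsCycle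

variable {α : Type*} {σ : Perm α}

theorem eq_or_exists_zpow_apply (hσ : σ.IsCycle) (x : α) :
    σ x = x ∨ ∃ i : ℤ, (σ ^ i) (Classical.choose hσ) = x := by
  by_cases hx : σ x = x
  · exact .inl hx
  · exact .inr ((Classical.choose_spec hσ).2 hx)

variable [Fintype α] [DecidableEq α]

/-- Transports inversion along `zpowersEquivSupport : zpowers σ ≃ σ.support`, `g ↦ g x₀`, and
extends it by the identity off the support. -/
noncomputable def reflection (hσ : σ.IsCycle) : Perm α :=
  ofSubtype (hσ.zpowersEquivSupport.permCongr (Equiv.inv _))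

theorem reflection_apply_zpow (hσ : σ.IsCycle) (i : ℤ) :
    hσ.reflection ((σ ^ i) (Classical.choose hσ)) = (σ ^ (-i)) (Classical.choose hσ) := by
  have hmem : (σ ^ i) (Classical.choose hσ) ∈ σ.support :=
    zpow_apply_mem_support.2 (mem_support.2 (Classical.choose_spec hσ).1)
  have hsymm : hσ.zpowersEquivSupport.symm ⟨_, hmem⟩ = ⟨σ ^ i, i, rfl⟩ :=
    (Equiv.symm_apply_eq _).2 rfl
  rw [reflection, ofSubtype_apply_of_mem _ hmem, permCongr_apply, hsymm, zpow_neg]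
  rfl

theorem reflection_apply_of_apply_eq (hσ : σ.IsCycle) {x : α} (hx : σ x = x) :
    hσ.reflection x = x :=
  ofSubtype_apply_of_not_mem _ (notMem_support.2 hx)

theorem reflection_mul_self (hσ : σ.IsCycle) : hσ.reflection * hσ.reflection = 1 := by
  ext x
  rcases hσ.eq_or_exists_zpow_apply x with hx | ⟨i, rfl⟩
  · simp only [mul_apply, hσ.reflection_apply_of_apply_eq hx, one_apply]
  · simp only [mul_apply, reflection_apply_zpow, neg_neg, one_apply]

theorem reflection_mul_mul_reflection (hσ : σ.IsCycle) :
    hσ.reflection * σ * hσ.reflection = σ⁻¹ := by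
  ext x
  rcases hσ.eq_or_exists_zpow_apply x with hx | ⟨i, rfl⟩
  · have hx' : σ⁻¹ x = x := inv_eq_iff_eq.2 hx.symm
    simp only [mul_apply, hσ.reflection_apply_of_apply_eq hx, hx, hx']
  · have hstep : σ ((σ ^ (-i)) (Classical.choose hσ)) = (σ ^ (1 - i)) (Classical.choose hσ) := by
      rw [sub_eq_add_neg, zpow_add, zpow_one, mul_apply]
    rw [mul_apply, mul_apply, reflection_apply_zpow, hstep, reflection_apply_zpow, neg_sub,
      sub_eq_neg_add, zpow_add, zpow_neg_one, mul_apply]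

theorem mul_reflection_mul_self (hσ : σ.IsCycle) :
    σ * hσ.reflection * (σ * hσ.reflection) = 1 := by
  rw [mul_assoc, ← mul_assoc hσ.reflection, hσ.reflection_mul_mul_reflection, mul_inv_cancel]

end Equiv.Perm.IsCycle

theorem stmt4_general {n : ℕ} (u : Equiv.Perm (Fin n)) (hu : u.IsCycle)
    (m : ℕ) (hme : Even m) :
    (∃ h : Equiv.Perm (Fin n), h ^ m = 1 ∧ (u * h) ^ m = 1) ∧
      {h : Equiv.Perm (Fin n) | (u * h) ^ m = h ^ m}.Nonempty := by
  obtain ⟨r, rfl⟩ := hme.two_dvd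
  have hh : hu.reflection ^ (2 * r) = 1 := by
    rw [pow_mul, sq, hu.reflection_mul_self, one_pow]
  have huh : (u * hu.reflection) ^ (2 * r) = 1 := by
    rw [pow_mul, sq, hu.mul_reflection_mul_self, one_pow]
  exact ⟨⟨hu.reflection, hh, huh⟩, hu.reflection, huh.trans hh.symm⟩

/-- If `u` is a `k`-cycle in `S_n` and `m` is a positive even integer, then there exists
`h` with `h^m = 1` and `(uh)^m = 1`; in particular `{h : (uh)^m = h^m}` is nonempty. -/
theorem stmt4 {n : ℕ} (u : Equiv.Perm (Fin n)) (k : ℕ) (hu : u.IsCycle)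
    (hk : u.support.card = k) (m : ℕ) (hm : 0 < m) (hme : Even m) :
    (∃ h : Equiv.Perm (Fin n), h ^ m = 1 ∧ (u * h) ^ m = 1) ∧
      {h : Equiv.Perm (Fin n) | (u * h) ^ m = h ^ m}.Nonempty :=
  stmt4_general u hu m hme
end

section
/- If u ∈ S_n is a single cycle of odd length k ≥ 3 (so u is an even permutation), then there exists h ∈ S_n with h^3 = 1 and (uh)^3 = 1. -/
/-!
List the cycle as `(a₀ a₁ … a_{2m})`. Peeling off two steps, `(a b c …) = (a b c) * (c …)`, so if
`(c …) = x * y` with `x ^ 3 = y ^ 3 = 1` and `x` fixing `c`, then `(a b c …) = ((a b c) * x) * y`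
with both factors again of order dividing 3, now with the second one fixing `a`. Reversing the list
inverts the cycle and exchanges the two factors, which restores the invariant, so induction on `m`
writes `u = x * y`; then `h = y⁻¹` gives `u * h = x`.
-/

open Equiv Equiv.Perm List

variable {α : Type*} [DecidableEq α]

namespace List

theorem formPerm_cons_reverse {a : α} {l : List α} (hnd : (a :: l).Nodup) :
    formPerm (a :: l.reverse) = (formPerm (a :: l))⁻¹ := by
  have hnd' : (l.reverse ++ [a]).Nodup := by
    rw [← reverse_cons]
    exact nodup_reverse.mpr hnd
  rw [← formPerm_reverse, reverse_cons, ← formPerm_rotate _ hnd' l.reverse.length,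
    rotate_append_length_eq, singleton_append]

theorem formPerm_cons_cons_cons (a b c : α) (l : List α) :
    formPerm (a :: b :: c :: l) = formPerm [a, b, c] * formPerm (c :: l) := by
  simp only [formPerm_cons_cons, formPerm_singleton, mul_one, mul_assoc]

theorem formPerm_triple_mul_pow_three_eq_one {a b c : α} {l : List α}
    (hnd : (a :: b :: c :: l).Nodup) {x : Equiv.Perm α} (hx : x ^ 3 = 1) (hxc : x c = c)
    (hxl : ∀ w ∉ c :: l, x w = w) : (formPerm [a, b, c] * x) ^ 3 = 1 := by
  have habc : [a, b, c].Nodup := hnd.sublist (by simp)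
  have hdisj : (formPerm [a, b, c]).Disjoint x := by
    intro w
    by_cases hw : w ∈ [a, b, c]
    · right
      simp only [mem_cons, not_mem_nil, or_false] at hw
      obtain rfl | rfl | rfl := hw
      · exact hxl _ fun h ↦ (nodup_cons.mp hnd).1 (.tail _ h)
      · exact hxl _ (nodup_cons.mp hnd.of_cons).1
      · exact hxc
    · exact .inl (formPerm_apply_of_notMem hw)
  rw [hdisj.commute.mul_pow, hx, mul_one]
  exact formPerm_pow_length_eq_one_of_nodup _ habc

theorem exists_formPerm_cons_eq_mul_of_even (a : α) (l : List α) (hnd : (a :: l).Nodup)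
    (hl : Even l.length) :
    ∃ x y : Equiv.Perm α, formPerm (a :: l) = x * y ∧ x ^ 3 = 1 ∧ y ^ 3 = 1 ∧ x a = a ∧
      ∀ w ∉ a :: l, x w = w ∧ y w = w := by
  obtain ⟨m, hm⟩ := hl
  induction m generalizing a l with
  | zero =>
    rw [length_eq_zero_iff.mp hm]
    exact ⟨1, 1, by simp, one_pow 3, one_pow 3, rfl, fun _ _ ↦ ⟨rfl, rfl⟩⟩
  | succ m ih =>
    obtain ⟨b, c, M, hrev⟩ : ∃ b c M, l.reverse = b :: c :: M := by
      have hlen : l.reverse.length = m + 1 + (m + 1) := by rw [length_reverse, hm]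
      match l.reverse, hlen with
      | b :: c :: M, _ => exact ⟨b, c, M, rfl⟩
      | [_], h => simp only [length_singleton] at h; omega
    have hmem : ∀ w, w ∈ a :: l ↔ w ∈ a :: b :: c :: M := by simp [← hrev]
    have hnd' : (a :: b :: c :: M).Nodup := by
      rw [← hrev, nodup_cons, mem_reverse, nodup_reverse]
      exact nodup_cons.mp hnd
    have hM : M.length = m + m := by
      have := congrArg length hrev
      simp only [length_reverse, length_cons] at this
      omega
    obtain ⟨x, y, hxy, hx, hy, hxc, hsupp⟩ := ih c M hnd'.of_cons.of_cons hM
    have htx := formPerm_triple_mul_pow_three_eq_one hnd' hx hxc fun w hw ↦ (hsupp w hw).1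
    have hya : y a = a := (hsupp a fun h ↦ (nodup_cons.mp hnd').1 (.tail _ h)).2
    refine ⟨y⁻¹, (formPerm [a, b, c] * x)⁻¹, ?_, by rw [inv_pow, hy, inv_one],
      by rw [inv_pow, htx, inv_one], inv_eq_iff_eq.mpr hya.symm, fun w hw ↦ ?_⟩
    · rw [← inv_inv (formPerm (a :: l)), ← formPerm_cons_reverse hnd, hrev,
        formPerm_cons_cons_cons, hxy, ← mul_assoc, mul_inv_rev]
    · rw [hmem] at hw
      have hw' : w ∉ c :: M := fun h ↦ hw (.tail _ (.tail _ h))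
      refine ⟨inv_eq_iff_eq.mpr (hsupp w hw').2.symm, inv_eq_iff_eq.mpr ?_⟩
      have habc : [a, b, c] ⊆ a :: b :: c :: M := by simp
      rw [mul_apply, (hsupp w hw').1, formPerm_apply_of_notMem fun h ↦ hw (habc h)]

theorem exists_formPerm_eq_mul_of_odd {l : List α} (hnd : l.Nodup) (hl : Odd l.length) :
    ∃ x y : Equiv.Perm α, formPerm l = x * y ∧ x ^ 3 = 1 ∧ y ^ 3 = 1 := by
  cases l with
  | nil => simp at hl
  | cons a l =>
    obtain ⟨x, y, hxy, hx, hy, -⟩ :=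
      exists_formPerm_cons_eq_mul_of_even a l hnd (by simpa [Nat.odd_add_one] using hl)
    exact ⟨x, y, hxy, hx, hy⟩

end List

theorem Equiv.Perm.IsCycle.exists_eq_mul_of_odd_card_support [Fintype α] {σ : Perm α}
    (hσ : σ.IsCycle) (hodd : Odd σ.support.card) :
    ∃ x y : Perm α, σ = x * y ∧ x ^ 3 = 1 ∧ y ^ 3 = 1 := by
  obtain ⟨a, ha⟩ := hσ.nonempty_support
  have hcycleOf : σ.cycleOf a = σ := hσ.cycleOf_eq (mem_support.mp ha)
  rw [← hcycleOf, ← formPerm_toList]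
  exact exists_formPerm_eq_mul_of_odd (nodup_toList σ a) (by rwa [length_toList, hcycleOf])

theorem stmt6_general {n : ℕ} (u : Equiv.Perm (Fin n)) (k : ℕ) (hu : u.IsCycle)
    (hk : u.support.card = k) (hkodd : Odd k) :
    ∃ h : Equiv.Perm (Fin n), h ^ 3 = 1 ∧ (u * h) ^ 3 = 1 := by
  obtain ⟨x, y, rfl, hx, hy⟩ := hu.exists_eq_mul_of_odd_card_support (hk ▸ hkodd)
  exact ⟨y⁻¹, by rw [inv_pow, hy, inv_one], by rw [mul_inv_cancel_right, hx]⟩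

/-- If `u` is a single cycle of odd length `k ≥ 3`, then there exists `h` with
`h^3 = 1` and `(uh)^3 = 1`. -/
theorem stmt6 {n : ℕ} (u : Equiv.Perm (Fin n)) (k : ℕ) (hu : u.IsCycle)
    (hk : u.support.card = k) (hkodd : Odd k) (hk3 : 3 ≤ k) :
    ∃ h : Equiv.Perm (Fin n), h ^ 3 = 1 ∧ (u * h) ^ 3 = 1 :=
  stmt6_general u k hu hk hkodd
end

section
/- If u ∈ S_n is a product of a transposition and a disjoint cycle of even length, then there exists h ∈ S_n with h^3 = 1 and (uh)^3 = 1. -/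
/-!
Write cycles as `formPerm` of lists. Multiplying a cycle on the right by a 3-cycle splits off a
3-cycle: `(z b₁ b₂ b₃ a … w) · (w b₃ b₂) = (z b₁ b₂) · (a … w)`, where `w` is the last point of
`(a … w)`. Since the new factors are disjoint, induction on the length shows that every odd cycle
`c` admits `h` with `h ^ 3 = 1 = (c * h) ^ 3`, and `h` may be chosen to fix any given point of `c`;
this is what keeps the inductive `h` for `(a … w)` disjoint from `(w b₃ b₂)`.
For `u = (a b)(x₀ x₁ … w)` the same trick absorbs the transposition:
`u · (w x₀ b) = (a b x₀) · (x₁ … w)`, with `(x₁ … w)` an odd cycle.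
-/

open Equiv List

namespace Equiv.Perm

variable {α : Type*}

theorem Disjoint.mul_pow_eq_one {p q : Perm α} {n : ℕ} (hpq : p.Disjoint q) (hp : p ^ n = 1)
    (hq : q ^ n = 1) : (p * q) ^ n = 1 := by
  rw [hpq.commute.mul_pow, hp, hq, one_mul]

theorem pow_three_eq_one_of_mul_eq {C t T E k : Perm α} (hC : C * t = T * E) (ht : t ^ 3 = 1)
    (hT : T ^ 3 = 1) (hk : k ^ 3 = 1) (hEk : (E * k) ^ 3 = 1) (htk : t.Disjoint k)
    (hTEk : T.Disjoint (E * k)) : (t * k) ^ 3 = 1 ∧ (C * (t * k)) ^ 3 = 1 :=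
  ⟨htk.mul_pow_eq_one ht hk, by rw [← mul_assoc, hC, mul_assoc]; exact hTEk.mul_pow_eq_one hT hEk⟩

variable [DecidableEq α]

theorem swap_mul_swap_pow_three {x y z : α} (hxy : x ≠ y) (hxz : x ≠ z) (hyz : y ≠ z) :
    (swap x y * swap y z) ^ 3 = 1 := by
  simpa using formPerm_pow_length_eq_one_of_nodup (l := [x, y, z]) (by simp [*])

theorem swap_mul_swap_apply_of_ne {x y z v : α} (hx : v ≠ x) (hy : v ≠ y) (hz : v ≠ z) :
    (swap x y * swap y z) v = v := by
  rw [mul_apply, swap_apply_of_ne_of_ne hy hz, swap_apply_of_ne_of_ne hx hy]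

theorem eq_or_eq_or_eq_of_swap_mul_swap_apply_ne {x y z v : α}
    (h : (swap x y * swap y z) v ≠ v) : v = x ∨ v = y ∨ v = z := by
  by_contra! hv
  exact h (swap_mul_swap_apply_of_ne hv.1 hv.2.1 hv.2.2)

theorem disjoint_swap_mul_swap {x y z : α} {p : Perm α}
    (h : ∀ v, p v ≠ v → v ≠ x ∧ v ≠ y ∧ v ≠ z) : (swap x y * swap y z).Disjoint p := by
  intro v
  by_cases hv : p v = v
  · exact .inr hv
  · obtain ⟨hx, hy, hz⟩ := h v hv
    exact .inl (swap_mul_swap_apply_of_ne hx hy hz)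

theorem swap_mul_mul_swap_mul_swap {E : Perm α} {x y v w : α} (hx : E x = x) (hv : E v = v)
    (hw : E w = y) : swap x y * E * (swap w x * swap x v) = swap v x * E := by
  have hconj : E * (swap w x * swap x v) = swap y x * swap x v * E := by
    rw [← mul_assoc, mul_swap_eq_swap_mul E w x, hw, hx, mul_assoc, mul_swap_eq_swap_mul E x v,
      hx, hv, mul_assoc]
  rw [mul_assoc, hconj, swap_comm y x, mul_assoc, swap_mul_self_mul, swap_comm]

theorem mem_of_formPerm_mul_apply_ne {l : List α} {k : Perm α} (hk : ∀ x, k x ≠ x → x ∈ l)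
    {x : α} (hx : (formPerm l * k) x ≠ x) : x ∈ l := by
  by_contra hxl
  rw [mul_apply, not_not.mp (mt (hk x) hxl), formPerm_apply_of_notMem hxl] at hx
  exact hx rfl

theorem exists_pow_three_eq_one_mul_formPerm_cons_cons_cons_cons {z b₁ b₂ b₃ a : α} {m : List α}
    (hl : (z :: b₁ :: b₂ :: b₃ :: a :: m).Nodup) {k : Perm α} (hk : k ^ 3 = 1)
    (hEk : (formPerm (a :: m) * k) ^ 3 = 1)
    (hk_supp : ∀ x, k x ≠ x → x ∈ a :: m ∧ x ≠ (a :: m).getLast (cons_ne_nil a m)) :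
    ∃ h : Perm α, h ^ 3 = 1 ∧ (formPerm (z :: b₁ :: b₂ :: b₃ :: a :: m) * h) ^ 3 = 1 ∧
      ∀ x, h x ≠ x → x ∈ z :: b₁ :: b₂ :: b₃ :: a :: m ∧ x ≠ z := by
  set w := (a :: m).getLast (cons_ne_nil a m)
  have hw : w ∈ a :: m := getLast_mem _
  rw [nodup_cons, nodup_cons, nodup_cons, nodup_cons] at hl
  obtain ⟨hz, hb₁, hb₂, hb₃, -⟩ := hl
  have hC : formPerm (z :: b₁ :: b₂ :: b₃ :: a :: m) * (swap w b₃ * swap b₃ b₂) =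
      (swap z b₁ * swap b₁ b₂) * formPerm (a :: m) := by
    have := swap_mul_mul_swap_mul_swap (formPerm_apply_of_notMem hb₃)
      (formPerm_apply_of_notMem fun h => hb₂ (mem_cons_of_mem _ h)) (formPerm_apply_getLast a m)
    rw [formPerm_cons_cons, formPerm_cons_cons, formPerm_cons_cons, formPerm_cons_cons]
    simp only [mul_assoc] at this ⊢
    rw [this, swap_mul_self_mul]
  obtain ⟨hh, hCh⟩ := pow_three_eq_one_of_mul_eq hC
    (swap_mul_swap_pow_three (by grind) (by grind) (by grind))
    (swap_mul_swap_pow_three (by grind) (by grind) (by grind)) hk hEk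
    (disjoint_swap_mul_swap fun v hv => by grind)
    (disjoint_swap_mul_swap fun v hv => by
      have := mem_of_formPerm_mul_apply_ne (fun x hx => (hk_supp x hx).1) hv
      grind)
  refine ⟨_, hh, hCh, fun x hx => ?_⟩
  by_cases hkx : k x = x
  · rw [mul_apply, hkx] at hx
    rcases eq_or_eq_or_eq_of_swap_mul_swap_apply_ne hx with rfl | rfl | rfl <;> grind
  · grind

theorem exists_pow_three_eq_one_mul_formPerm {l : List α} (hl : l.Nodup) (hodd : Odd l.length)
    {z : α} (hz : z ∈ l) :
    ∃ k : Perm α, k ^ 3 = 1 ∧ (formPerm l * k) ^ 3 = 1 ∧ ∀ x, k x ≠ x → x ∈ l ∧ x ≠ z := by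
  induction hn : l.length using Nat.strong_induction_on generalizing l z with
  | _ n ih =>
  obtain ⟨s, r, rfl⟩ := append_of_mem hz
  have hrot : s ++ z :: r ~r z :: (r ++ s) := by
    simpa using isRotated_append (l := s) (l' := z :: r)
  rw [formPerm_eq_of_isRotated hl hrot]
  simp only [hrot.mem_iff]
  rw [hrot.perm.length_eq] at hodd hn
  replace hl := hrot.nodup_iff.mp hl
  generalize r ++ s = q at hl hodd hn
  subst hn
  rcases q with _ | ⟨b₁, _ | ⟨b₂, _ | ⟨b₃, _ | ⟨a, m⟩⟩⟩⟩
  · exact ⟨1, by simp⟩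
  · simp [Nat.odd_iff] at hodd
  · refine ⟨1, one_pow 3, ?_, by simp⟩
    rw [mul_one, formPerm_cons_cons, formPerm_pair]
    exact swap_mul_swap_pow_three (by grind) (by grind) (by grind)
  · simp [Nat.odd_iff] at hodd
  · obtain ⟨k, hk, hEk, hk_supp⟩ := ih (m.length + 1) (by simp only [length_cons]; omega)
      (hl.sublist (drop_sublist 4 _)) (by simpa [parity_simps] using hodd)
      (getLast_mem (cons_ne_nil a m)) rfl
    exact exists_pow_three_eq_one_mul_formPerm_cons_cons_cons_cons hl hk hEk hk_supp

theorem exists_pow_three_eq_one_swap_mul_formPerm {a b : α} {l : List α} (hab : a ≠ b)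
    (ha : a ∉ l) (hb : b ∉ l) (hl : l.Nodup) (hne : l ≠ []) (heven : Even l.length) :
    ∃ h : Perm α, h ^ 3 = 1 ∧ (swap a b * formPerm l * h) ^ 3 = 1 := by
  rcases l with _ | ⟨x₀, _ | ⟨x₁, l⟩⟩
  · exact absurd rfl hne
  · simp at heven
  set w := (x₁ :: l).getLast (cons_ne_nil x₁ l)
  obtain ⟨k, hk, hEk, hk_supp⟩ := exists_pow_three_eq_one_mul_formPerm
    (hl.sublist (drop_sublist 1 _)) (by simpa [parity_simps] using heven)
    (getLast_mem (cons_ne_nil x₁ l))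
  have hw : w ∈ x₁ :: l := getLast_mem _
  have hC : swap a b * formPerm (x₀ :: x₁ :: l) * (swap w x₀ * swap x₀ b) =
      (swap a b * swap b x₀) * formPerm (x₁ :: l) := by
    rw [formPerm_cons_cons, mul_assoc, mul_assoc, ← mul_assoc (swap x₀ x₁),
      swap_mul_mul_swap_mul_swap (formPerm_apply_of_notMem (nodup_cons.mp hl).1)
        (formPerm_apply_of_notMem fun h => hb (mem_cons_of_mem _ h)) (formPerm_apply_getLast x₁ l),
      mul_assoc]
  obtain ⟨hh, hCh⟩ := pow_three_eq_one_of_mul_eq hC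
    (swap_mul_swap_pow_three (by grind) (by grind) (by grind))
    (swap_mul_swap_pow_three (by grind) (by grind) (by grind)) hk hEk
    (disjoint_swap_mul_swap fun v hv => by grind)
    (disjoint_swap_mul_swap fun v hv => by
      have := mem_of_formPerm_mul_apply_ne (fun x hx => (hk_supp x hx).1) hv
      grind)
  exact ⟨_, hh, hCh⟩

end Equiv.Perm

theorem stmt7_general {n : ℕ} (u σ₁ σ₂ : Equiv.Perm (Fin n)) (hu : u = σ₁ * σ₂)
    (h1 : σ₁.IsSwap) (h2 : σ₂.IsCycle) (h2even : Even σ₂.support.card)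
    (hdisj : σ₁.Disjoint σ₂) :
    ∃ h : Equiv.Perm (Fin n), h ^ 3 = 1 ∧ (u * h) ^ 3 = 1 := by
  obtain ⟨a, b, hab, rfl⟩ := h1
  obtain ⟨c, hc, -⟩ := id h2
  set l := σ₂.toList c
  have hσ₂ : formPerm l = σ₂ := by rw [Perm.formPerm_toList, h2.cycleOf_eq hc]
  have hlen : l.length = σ₂.support.card := by rw [Perm.length_toList, h2.cycleOf_eq hc]
  have hnotMem : ∀ x, swap a b x ≠ x → x ∉ l := fun x hx hxl =>
    (hdisj x).elim hx (Perm.mem_support.mp ((Perm.mem_toList_iff.mp hxl).1.mem_support_iff.mp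
      (Perm.mem_toList_iff.mp hxl).2))
  rw [hu, ← hσ₂]
  exact Perm.exists_pow_three_eq_one_swap_mul_formPerm hab
    (hnotMem a (by rw [swap_apply_left]; exact hab.symm))
    (hnotMem b (by rw [swap_apply_right]; exact hab)) (Perm.nodup_toList σ₂ c)
    (fun h => Perm.toList_eq_nil_iff.mp h (Perm.mem_support.mpr hc)) (hlen ▸ h2even)

/-- If `u` is a product of a transposition and a disjoint cycle of even length (≥ 4),
then there exists `h` with `h^3 = 1` and `(uh)^3 = 1`. -/
theorem stmt7 {n : ℕ} (u σ₁ σ₂ : Equiv.Perm (Fin n)) (hu : u = σ₁ * σ₂)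
    (h1 : σ₁.IsSwap) (h2 : σ₂.IsCycle) (h2even : Even σ₂.support.card)
    (h2len : 4 ≤ σ₂.support.card) (hdisj : σ₁.Disjoint σ₂) :
    ∃ h : Equiv.Perm (Fin n), h ^ 3 = 1 ∧ (u * h) ^ 3 = 1 :=
  stmt7_general u σ₁ σ₂ hu h1 h2 h2even hdisj
end
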